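/- Let α ∈ (0,1). The fractional-linear transformation s(z) = ((2α - 1 - z(2α+1))·s₁(z) + 1 + z)/(2α + 1 - z(2α-1) - (1+z)·s₁(z)) gives a one-to-one correspondence between the Schur functions s satisfying s(z) = 1 + α(z-1) + O((z-1)^2) as z tends nontangentially to 1, and the Schur functions s₁ satisfying liminf_{z →̂ 1} |s₁(z) - 1| > 0. Moreover, the constant parameter s₁ ≡ 1 - 2α corresponds to the solution s(z) = αz + 1 - α. -/

import Mathlib

noncomputable section

open Complex Filter

/-- The open unit disk in the complex plane. -/
def unitDisk : Set ℂ := {z : ℂ | ‖z‖ < 1}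

/-- A Schur function: analytic on the open unit disk and bounded by one in modulus there. -/
def SchurFunction (f : ℂ → ℂ) : Prop :=
  DifferentiableOn ℂ f unitDisk ∧ ∀ z ∈ unitDisk, ‖f z‖ ≤ 1

/-- The Stolz region with parameter `K` at the boundary point `1`. -/
def stolzRegion (K : ℝ) : Set ℂ :=
  {z : ℂ | ‖z‖ < 1 ∧ ‖z - 1‖ < K * (1 - ‖z‖)}

/-- `f(z) = O((z-1)^m)` as `z` tends nontangentially to `1`. -/
def NTBigO (f : ℂ → ℂ) (m : ℕ) : Prop :=
  ∀ K > (1 : ℝ), f =O[nhdsWithin 1 (stolzRegion K)] fun z => (z - 1) ^ m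

/-- `liminf_{z →̂ 1} |f(z) - c| > 0`: within every Stolz region the limit inferior of
`|f(z) - c|` as `z → 1` is strictly positive. -/
def NTLiminfPos (f : ℂ → ℂ) (c : ℂ) : Prop :=
  ∀ K > (1 : ℝ),
    0 < Filter.liminf (fun z => ‖f z - c‖) (nhdsWithin 1 (stolzRegion K))

/-- The fractional-linear transformation parametrizing the solutions of the boundary
interpolation problem `s(z) = 1 + α(z-1) + O((z-1)²)`. -/
def lft (α : ℝ) (s₁ : ℂ → ℂ) : ℂ → ℂ :=
  fun z => ((2 * α - 1 - z * (2 * α + 1)) * s₁ z + 1 + z) /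
    (2 * α + 1 - z * (2 * α - 1) - (1 + z) * s₁ z)

/-!
For fixed `z`, `lft α · z` is the Möbius map `w ↦ (A w + B) / (-B w + C)` with determinant
`A C + B² = 4α²(1 - z)²`, hence injective with inverse `s ↦ (C s - B) / (A + B s)`. The identity
`|C - B w|² - |A w + B|² = 4α²(1 - |w|²)|1 - z|² + 4α(1 - |z|²)|1 - w|²` makes it map Schur
functions to Schur functions, and
`lft α s₁ - (1 + α(z - 1)) = α(z - 1)²(s₁ + 2α - 1) / (2(1 - s₁) + O(z - 1))` gives the
interpolation condition as soon as `s₁` stays away from `1`.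

Conversely, the interpolation condition says that `s` has angular derivative `α` at `1`, so Julia's
inequality `(1 - |z|²)|1 - s|² ≤ α(1 - |s|²)|1 - z|²` holds (Schwarz–Pick at `z` and at a radial
point `t`, divided by `1 - t`, as `t → 1`). It is exactly the nonnegativity of
`|A + B s|² - |C s - B|² = 4α(α(1 - |s|²)|1 - z|² - (1 - |z|²)|1 - s|²)`, so the inverse image
`s₁` of `s` is a Schur function; and `s₁ - 1 = 2α(1 - z)(s - 1) / (A + B s)` with
`s - 1 ≍ α(z - 1)` and `A + B s = O((z - 1)²)` keeps `s₁` away from `1`.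
-/

open Metric Set Topology ComplexConjugate Asymptotics

theorem unitDisk_eq_ball : unitDisk = ball (0 : ℂ) 1 := by
  ext z; simp [unitDisk]

theorem norm_sq_one_sub_conj_mul_sub_norm_sq_sub (a b : ℂ) :
    ‖1 - conj a * b‖ ^ 2 - ‖a - b‖ ^ 2 = (1 - ‖a‖ ^ 2) * (1 - ‖b‖ ^ 2) := by
  apply ofReal_injective
  push_cast [← mul_conj']
  simp only [map_sub, map_mul, map_one, conj_conj]
  ring

theorem one_sub_conj_mul_ne_zero {a b : ℂ} (ha : ‖a‖ < 1) (hb : ‖b‖ ≤ 1) :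
    1 - conj a * b ≠ 0 := by
  refine sub_ne_zero.2 (fun h => ?_)
  have : ‖conj a * b‖ < 1 := by
    rw [norm_mul, norm_conj]; exact mul_lt_one_of_nonneg_of_lt_one_left (norm_nonneg _) ha hb
  rw [← h, norm_one] at this
  exact this.false

def diskInvolution (a ζ : ℂ) : ℂ := (a - ζ) / (1 - conj a * ζ)

@[simp] theorem diskInvolution_zero (a : ℂ) : diskInvolution a 0 = a := by
  simp [diskInvolution]

@[simp] theorem diskInvolution_self (a : ℂ) : diskInvolution a a = 0 := by
  simp [diskInvolution]

theorem one_sub_norm_sq_diskInvolution {a b : ℂ} (h : 1 - conj a * b ≠ 0) :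
    1 - ‖diskInvolution a b‖ ^ 2 =
      (1 - ‖a‖ ^ 2) * (1 - ‖b‖ ^ 2) / ‖1 - conj a * b‖ ^ 2 := by
  rw [diskInvolution, norm_div, div_pow, ← norm_sq_one_sub_conj_mul_sub_norm_sq_sub,
    eq_div_iff (by positivity), sub_mul, div_mul_cancel₀ _ (by positivity), one_mul]

theorem norm_diskInvolution_lt_one {a b : ℂ} (ha : ‖a‖ < 1) (hb : ‖b‖ < 1) :
    ‖diskInvolution a b‖ < 1 := by
  have hD := one_sub_conj_mul_ne_zero ha hb.le
  have ha2 : ‖a‖ ^ 2 < 1 := (sq_lt_one_iff₀ (norm_nonneg _)).2 ha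
  have hb2 : ‖b‖ ^ 2 < 1 := (sq_lt_one_iff₀ (norm_nonneg _)).2 hb
  have hpos : 0 < 1 - ‖diskInvolution a b‖ ^ 2 := by
    rw [one_sub_norm_sq_diskInvolution hD]
    exact div_pos (mul_pos (by linarith) (by linarith)) (by positivity)
  exact (sq_lt_one_iff₀ (norm_nonneg _)).1 (by linarith)

theorem diskInvolution_diskInvolution {a b : ℂ} (ha : ‖a‖ < 1) (hb : ‖b‖ < 1) :
    diskInvolution a (diskInvolution a b) = b := by
  have hD := one_sub_conj_mul_ne_zero ha hb.le
  have haa := one_sub_conj_mul_ne_zero ha ha.le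
  have hnum : a - diskInvolution a b = b * (1 - conj a * a) / (1 - conj a * b) := by
    rw [diskInvolution, eq_div_iff hD, sub_mul, div_mul_cancel₀ _ hD]; ring
  have hden : 1 - conj a * diskInvolution a b = (1 - conj a * a) / (1 - conj a * b) := by
    rw [diskInvolution, eq_div_iff hD, sub_mul, mul_assoc, div_mul_cancel₀ _ hD]; ring
  rw [diskInvolution, hnum, hden, div_div_div_cancel_right₀ hD, mul_div_cancel_right₀ _ haa]

theorem differentiableOn_diskInvolution {a : ℂ} (ha : ‖a‖ < 1) :
    DifferentiableOn ℂ (diskInvolution a) (ball 0 1) := by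
  refine DifferentiableOn.div (by fun_prop) (by fun_prop) fun ζ hζ => ?_
  exact one_sub_conj_mul_ne_zero ha (mem_ball_zero_iff.1 hζ).le

theorem mapsTo_diskInvolution {a : ℂ} (ha : ‖a‖ < 1) :
    MapsTo (diskInvolution a) (ball 0 1) (ball 0 1) := fun ζ hζ => by
  rw [mem_ball_zero_iff] at hζ ⊢
  exact norm_diskInvolution_lt_one ha hζ

theorem norm_diskInvolution_le_of_mapsTo_ball {f : ℂ → ℂ}
    (hd : DifferentiableOn ℂ f (ball 0 1)) (hf : MapsTo f (ball 0 1) (ball 0 1)) {z w : ℂ}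
    (hz : ‖z‖ < 1) (hw : ‖w‖ < 1) : ‖diskInvolution (f w) (f z)‖ ≤ ‖diskInvolution w z‖ := by
  have hfw : ‖f w‖ < 1 := mem_ball_zero_iff.1 (hf (mem_ball_zero_iff.2 hw))
  set g := diskInvolution (f w) ∘ f ∘ diskInvolution w
  have hg : DifferentiableOn ℂ g (ball 0 1) :=
    (differentiableOn_diskInvolution hfw).comp (hd.comp (differentiableOn_diskInvolution hw)
      (mapsTo_diskInvolution hw)) (hf.comp (mapsTo_diskInvolution hw))
  have hgmaps : MapsTo g (ball 0 1) (closedBall 0 1) :=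
    ((mapsTo_diskInvolution hfw).comp (hf.comp (mapsTo_diskInvolution hw))).mono_right
      ball_subset_closedBall
  have hschwarz := norm_le_norm_of_mapsTo_ball hg hgmaps (by simp [g])
    (norm_diskInvolution_lt_one hw hz)
  simpa [g, diskInvolution_diskInvolution hw hz] using hschwarz

theorem SchurFunction.schwarzPick {f : ℂ → ℂ} (hf : SchurFunction f) {z w : ℂ}
    (hz : z ∈ unitDisk) (hw : w ∈ unitDisk) :
    (1 - ‖w‖ ^ 2) * (1 - ‖z‖ ^ 2) * ‖1 - conj (f w) * f z‖ ^ 2 ≤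
      (1 - ‖f w‖ ^ 2) * (1 - ‖f z‖ ^ 2) * ‖1 - conj w * z‖ ^ 2 := by
  rw [SchurFunction, unitDisk_eq_ball] at hf
  by_cases hmaps : MapsTo f (ball 0 1) (ball 0 1)
  · have hfz : ‖f z‖ < 1 := mem_ball_zero_iff.1 (hmaps (mem_ball_zero_iff.2 hz))
    have hfw : ‖f w‖ < 1 := mem_ball_zero_iff.1 (hmaps (mem_ball_zero_iff.2 hw))
    have hwz := one_sub_conj_mul_ne_zero hw hz.le
    have hfwz := one_sub_conj_mul_ne_zero hfw hfz.le
    have h : 1 - ‖diskInvolution w z‖ ^ 2 ≤ 1 - ‖diskInvolution (f w) (f z)‖ ^ 2 := by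
      gcongr
      exact norm_diskInvolution_le_of_mapsTo_ball hf.1 hmaps hz hw
    rwa [one_sub_norm_sq_diskInvolution hwz, one_sub_norm_sq_diskInvolution hfwz,
      div_le_div_iff₀ (by positivity) (by positivity)] at h
  · -- `‖f‖` attains its maximum `1` inside the disk, so `f` is a unimodular constant.
    obtain ⟨v, hv, hfv⟩ : ∃ v ∈ ball (0 : ℂ) 1, 1 ≤ ‖f v‖ := by
      simpa [MapsTo] using hmaps
    have hconst := Complex.eq_const_of_exists_max hf.1 hv fun u hu => (hf.2 u hu).trans hfv
    have hnorm : ‖f v‖ = 1 := le_antisymm (hf.2 v hv) hfv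
    have hc : 1 - conj (f v) * f v = 0 := by
      rw [mul_comm, mul_conj', hnorm]; norm_num
    rw [hconst (mem_ball_zero_iff.2 hz), hconst (mem_ball_zero_iff.2 hw)]
    simp [hc, hnorm]

theorem tendsto_one_of_tendsto_one_sub_div_one_sub {g : ℝ → ℂ} {β : ℂ}
    (hβ : Tendsto (fun t : ℝ => (1 - g t) / (1 - t)) (𝓝[<] 1) (𝓝 β)) :
    Tendsto g (𝓝[<] 1) (𝓝 1) := by
  have hlin : Tendsto (fun t : ℝ => (1 : ℂ) - t) (𝓝[<] 1) (𝓝 0) := by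
    have : Tendsto (fun t : ℝ => (1 : ℂ) - t) (𝓝 1) (𝓝 (1 - ((1 : ℝ) : ℂ))) :=
      (continuous_const.sub continuous_ofReal).tendsto 1
    simpa using this.mono_left nhdsWithin_le_nhds
  have := tendsto_const_nhds (x := (1 : ℂ)).sub (hlin.mul hβ)
  rw [zero_mul, sub_zero] at this
  refine this.congr' ?_
  filter_upwards [self_mem_nhdsWithin] with t (ht : t < 1)
  rw [mul_div_cancel₀ _ (sub_ne_zero.2 (by exact_mod_cast ht.ne')), sub_sub_cancel]

theorem SchurFunction.schwarzPick_radial {s : ℂ → ℂ} (hs : SchurFunction s) {z : ℂ}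
    (hz : z ∈ unitDisk) {t : ℝ} (ht : t ∈ Ioo 0 1) :
    (1 + t) * ((1 - ‖z‖ ^ 2) * ‖1 - conj (s t) * s z‖ ^ 2) ≤
      2 * ‖(1 - s t) / (1 - t)‖ * ((1 - ‖s z‖ ^ 2) * ‖1 - t * z‖ ^ 2) := by
  obtain ⟨ht0, ht1⟩ := ht
  have htD : (t : ℂ) ∈ unitDisk := by simp [unitDisk, abs_of_pos ht0, ht1]
  have hsp := hs.schwarzPick hz htD
  simp only [conj_ofReal, norm_real, Real.norm_eq_abs, sq_abs] at hsp
  have hnorm : ‖(1 - s t) / (1 - t)‖ = ‖1 - s t‖ / (1 - t) := by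
    rw [norm_div, ← ofReal_one, ← ofReal_sub, norm_real, Real.norm_of_nonneg (by linarith),
      ofReal_one]
  have hdefect : 1 - ‖s t‖ ^ 2 ≤ 2 * ‖1 - s t‖ := by
    nlinarith [norm_sub_norm_le (1 : ℂ) (s t), norm_one (α := ℂ), norm_nonneg (s t),
      hs.2 _ htD]
  have hfac : 0 ≤ (1 - ‖s z‖ ^ 2) * ‖1 - t * z‖ ^ 2 := by
    have : ‖s z‖ ^ 2 ≤ 1 := pow_le_one₀ (norm_nonneg _) (hs.2 z hz)
    have : 0 ≤ 1 - ‖s z‖ ^ 2 := by linarith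
    positivity
  rw [hnorm, ← mul_le_mul_iff_of_pos_left (sub_pos.2 ht1)]
  calc (1 - t) * ((1 + t) * ((1 - ‖z‖ ^ 2) * ‖1 - conj (s t) * s z‖ ^ 2))
      = (1 - t ^ 2) * (1 - ‖z‖ ^ 2) * ‖1 - conj (s t) * s z‖ ^ 2 := by ring
    _ ≤ (1 - ‖s t‖ ^ 2) * ((1 - ‖s z‖ ^ 2) * ‖1 - t * z‖ ^ 2) := by
      rw [← mul_assoc]; exact hsp
    _ ≤ 2 * ‖1 - s t‖ * ((1 - ‖s z‖ ^ 2) * ‖1 - t * z‖ ^ 2) :=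
      mul_le_mul_of_nonneg_right hdefect hfac
    _ = (1 - t) * (2 * (‖1 - s t‖ / (1 - t)) * ((1 - ‖s z‖ ^ 2) * ‖1 - t * z‖ ^ 2)) := by
      field_simp [(sub_pos.2 ht1).ne']

theorem SchurFunction.julia {s : ℂ → ℂ} (hs : SchurFunction s) {β : ℂ}
    (hβ : Tendsto (fun t : ℝ => (1 - s t) / (1 - t)) (𝓝[<] 1) (𝓝 β)) {z : ℂ}
    (hz : z ∈ unitDisk) :
    (1 - ‖z‖ ^ 2) * ‖1 - s z‖ ^ 2 ≤ ‖β‖ * (1 - ‖s z‖ ^ 2) * ‖1 - z‖ ^ 2 := by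
  have hst := tendsto_one_of_tendsto_one_sub_div_one_sub hβ
  have hlhs : Tendsto
      (fun t : ℝ => (1 + t) * ((1 - ‖z‖ ^ 2) * ‖1 - conj (s t) * s z‖ ^ 2)) (𝓝[<] 1)
      (𝓝 ((1 + 1) * ((1 - ‖z‖ ^ 2) * ‖1 - conj 1 * s z‖ ^ 2))) := by
    refine (tendsto_const_nhds.add (tendsto_id.mono_left nhdsWithin_le_nhds)).mul
      (tendsto_const_nhds.mul ?_)
    exact (((continuous_conj.tendsto 1).comp hst).mul_const (s z)).const_sub 1 |>.norm.pow 2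
  have hrhs : Tendsto
      (fun t : ℝ => 2 * ‖(1 - s t) / (1 - t)‖ * ((1 - ‖s z‖ ^ 2) * ‖1 - t * z‖ ^ 2)) (𝓝[<] 1)
      (𝓝 (2 * ‖β‖ * ((1 - ‖s z‖ ^ 2) * ‖1 - ((1 : ℝ) : ℂ) * z‖ ^ 2))) := by
    refine (hβ.norm.const_mul 2).mul (tendsto_const_nhds.mul ?_)
    have : Continuous fun t : ℝ => ‖1 - (t : ℂ) * z‖ ^ 2 := by fun_prop
    exact (this.tendsto 1).mono_left nhdsWithin_le_nhds
  have hlim := le_of_tendsto_of_tendsto hlhs hrhs <| by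
    filter_upwards [Ioo_mem_nhdsLT (show (0 : ℝ) < 1 by norm_num)] with t ht
    exact hs.schwarzPick_radial hz ht
  simp only [map_one, one_mul, ofReal_one] at hlim
  linarith

theorem stolzRegion_subset_unitDisk (K : ℝ) : stolzRegion K ⊆ unitDisk := fun _ hz => hz.1

theorem ofReal_mem_stolzRegion {K t : ℝ} (hK : 1 < K) (ht : t ∈ Ioo 0 1) :
    (t : ℂ) ∈ stolzRegion K := by
  have h1t : ‖(t : ℂ) - 1‖ = 1 - t := by
    rw [← ofReal_one, ← ofReal_sub, norm_real, Real.norm_of_nonpos (by linarith [ht.2])]; ring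
  refine ⟨?_, ?_⟩ <;> simp only [norm_real, Real.norm_of_nonneg ht.1.le, h1t]
  · exact ht.2
  · nlinarith [ht.2]

theorem tendsto_ofReal_nhdsLT_stolzRegion {K : ℝ} (hK : 1 < K) :
    Tendsto (fun t : ℝ => (t : ℂ)) (𝓝[<] 1) (𝓝[stolzRegion K] 1) := by
  refine tendsto_nhdsWithin_of_tendsto_nhds_of_eventually_within _ ?_ ?_
  · simpa using (continuous_ofReal.tendsto 1).mono_left nhdsWithin_le_nhds
  · filter_upwards [Ioo_mem_nhdsLT (show (0 : ℝ) < 1 by norm_num)] with t ht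
    exact ofReal_mem_stolzRegion hK ht

theorem nhdsWithin_stolzRegion_neBot {K : ℝ} (hK : 1 < K) :
    (𝓝[stolzRegion K] (1 : ℂ)).NeBot :=
  (tendsto_ofReal_nhdsLT_stolzRegion hK).neBot

theorem ntLiminfPos_iff_isBigO {f : ℂ → ℂ} (c : ℂ) (hf : ∀ z ∈ unitDisk, ‖f z‖ ≤ 1) :
    NTLiminfPos f c ↔
      ∀ K > (1 : ℝ), (fun _ => (1 : ℂ)) =O[𝓝[stolzRegion K] 1] fun z => f z - c := by
  refine forall₂_congr fun K hK => ?_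
  have := nhdsWithin_stolzRegion_neBot hK
  rw [isBigO_const_left_iff_pos_le_norm one_ne_zero]
  have hbddAbove : IsBoundedUnder (· ≤ ·) (𝓝[stolzRegion K] 1) fun z => ‖f z - c‖ := by
    refine isBoundedUnder_of_eventually_le (a := 1 + ‖c‖) ?_
    filter_upwards [self_mem_nhdsWithin] with z hz
    exact (norm_sub_le _ _).trans (by linarith [hf z hz.1])
  constructor
  · intro h
    have hbddBelow : IsBoundedUnder (· ≥ ·) (𝓝[stolzRegion K] 1) fun z => ‖f z - c‖ :=
      isBoundedUnder_of_eventually_ge (a := 0) (Eventually.of_forall fun _ => norm_nonneg _)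
    exact ⟨_, half_pos h, (eventually_lt_of_lt_liminf (half_lt_self h) hbddBelow).mono
      fun _ => le_of_lt⟩
  · rintro ⟨b, hb, h⟩
    exact hb.trans_le (le_liminf_of_le hbddAbove.isCoboundedUnder_ge h)

theorem tendsto_sub_one_nhdsWithin_stolzRegion (K : ℝ) :
    Tendsto (fun z : ℂ => z - 1) (𝓝[stolzRegion K] 1) (𝓝 0) := by
  simpa using ((continuous_sub_right (1 : ℂ)).tendsto 1).mono_left nhdsWithin_le_nhds

theorem NTBigO.tendsto_one_sub_div_one_sub {s : ℂ → ℂ} {β : ℂ}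
    (h : NTBigO (fun z => s z - (1 + β * (z - 1))) 2) :
    Tendsto (fun t : ℝ => (1 - s t) / (1 - t)) (𝓝[<] 1) (𝓝 β) := by
  have hreal := tendsto_ofReal_nhdsLT_stolzRegion one_lt_two
  have hlittle :
      (fun t : ℝ => s t - (1 + β * (t - 1))) =o[𝓝[<] 1] fun t : ℝ => (t : ℂ) - 1 :=
    ((h 2 one_lt_two).comp_tendsto hreal).trans_isLittleO
      ((isLittleO_pow_id one_lt_two).comp_tendsto
        ((tendsto_sub_one_nhdsWithin_stolzRegion 2).comp hreal))
  have := tendsto_const_nhds (x := β) |>.add hlittle.tendsto_div_nhds_zero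
  rw [add_zero] at this
  refine this.congr' ?_
  filter_upwards [self_mem_nhdsWithin] with t (ht : t < 1)
  have : (t : ℂ) - 1 ≠ 0 := sub_ne_zero.2 (by exact_mod_cast ht.ne)
  have : (1 : ℂ) - t ≠ 0 := sub_ne_zero.2 (by exact_mod_cast ht.ne')
  field_simp
  ring

section Mobius

variable {𝕜 : Type*} [Field 𝕜] {a b c d : 𝕜}

theorem mobius_injective {w w' : 𝕜} (hdet : a * d - b * c ≠ 0) (hw : c * w + d ≠ 0)
    (hw' : c * w' + d ≠ 0) (h : (a * w + b) / (c * w + d) = (a * w' + b) / (c * w' + d)) :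
    w = w' := by
  rw [div_eq_div_iff hw hw'] at h
  have : (a * d - b * c) * (w - w') = 0 := by linear_combination h
  exact sub_eq_zero.1 ((mul_eq_zero.1 this).resolve_left hdet)

theorem mobius_eq_of_mul_eq {w y : 𝕜} (hdet : a * d - b * c ≠ 0)
    (h : (a - c * y) * w = d * y - b) : (a * w + b) / (c * w + d) = y := by
  have hnum : a * w + b = y * (c * w + d) := by linear_combination h
  have hden : c * w + d ≠ 0 := fun hden =>
    hdet (by linear_combination a * hden - c * hnum - c * y * hden)
  rw [hnum, mul_div_cancel_right₀ _ hden]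

end Mobius

def lftA (α : ℝ) (z : ℂ) : ℂ := 2 * α - 1 - z * (2 * α + 1)
def lftB (z : ℂ) : ℂ := 1 + z
def lftC (α : ℝ) (z : ℂ) : ℂ := 2 * α + 1 - z * (2 * α - 1)

theorem lft_apply (α : ℝ) (s₁ : ℂ → ℂ) (z : ℂ) :
    lft α s₁ z = (lftA α z * s₁ z + lftB z) / (-lftB z * s₁ z + lftC α z) := by
  rw [lft, lftA, lftB, lftC]; ring

theorem lft_det (α : ℝ) (z : ℂ) :
    lftA α z * lftC α z - lftB z * -lftB z = (2 * α) ^ 2 * (1 - z) ^ 2 := by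
  rw [lftA, lftB, lftC]; ring

theorem lft_det_ne_zero {α : ℝ} (hα : α ≠ 0) {z : ℂ} (hz : z ∈ unitDisk) :
    lftA α z * lftC α z - lftB z * -lftB z ≠ 0 := by
  rw [lft_det]
  have : z ≠ 1 := by rintro rfl; simp [unitDisk] at hz
  exact mul_ne_zero (pow_ne_zero 2 (mul_ne_zero two_ne_zero (ofReal_ne_zero.2 hα)))
    (pow_ne_zero 2 (sub_ne_zero.2 (Ne.symm this)))

theorem norm_sq_lft_den_sub_norm_sq_lft_num (α : ℝ) (z w : ℂ) :
    ‖-lftB z * w + lftC α z‖ ^ 2 - ‖lftA α z * w + lftB z‖ ^ 2 =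
      4 * α ^ 2 * (1 - ‖w‖ ^ 2) * ‖1 - z‖ ^ 2 +
        4 * α * (1 - ‖z‖ ^ 2) * ‖1 - w‖ ^ 2 := by
  apply ofReal_injective
  push_cast [← mul_conj', lftA, lftB, lftC]
  simp only [map_sub, map_add, map_mul, map_neg, map_one, map_ofNat, conj_ofReal]
  ring

theorem norm_sq_lftInv_den_sub_norm_sq_lftInv_num (α : ℝ) (z y : ℂ) :
    ‖lftA α z + lftB z * y‖ ^ 2 - ‖lftC α z * y - lftB z‖ ^ 2 =
      4 * α * (α * (1 - ‖y‖ ^ 2) * ‖1 - z‖ ^ 2 - (1 - ‖z‖ ^ 2) * ‖1 - y‖ ^ 2) := by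
  apply ofReal_injective
  push_cast [← mul_conj', lftA, lftB, lftC]
  simp only [map_sub, map_add, map_mul, map_one, map_ofNat, conj_ofReal]
  ring

section Parametrization

variable {α : ℝ}

theorem norm_lft_num_le_norm_lft_den (hα : 0 ≤ α) {z w : ℂ} (hz : ‖z‖ ≤ 1)
    (hw : ‖w‖ ≤ 1) : ‖lftA α z * w + lftB z‖ ≤ ‖-lftB z * w + lftC α z‖ := by
  have h := norm_sq_lft_den_sub_norm_sq_lft_num α z w
  have : 0 ≤ 1 - ‖w‖ ^ 2 := sub_nonneg.2 (pow_le_one₀ (norm_nonneg _) hw)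
  have : 0 ≤ 1 - ‖z‖ ^ 2 := sub_nonneg.2 (pow_le_one₀ (norm_nonneg _) hz)
  have : 0 ≤ 4 * α ^ 2 * (1 - ‖w‖ ^ 2) * ‖1 - z‖ ^ 2 +
      4 * α * (1 - ‖z‖ ^ 2) * ‖1 - w‖ ^ 2 := by positivity
  exact (pow_le_pow_iff_left₀ (norm_nonneg _) (norm_nonneg _) two_ne_zero).1 (by linarith)

theorem lft_den_ne_zero (hα : 0 < α) {z w : ℂ} (hz : z ∈ unitDisk) (hw : ‖w‖ ≤ 1) :
    -lftB z * w + lftC α z ≠ 0 := by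
  intro hden
  have hnum := norm_lft_num_le_norm_lft_den hα.le hz.le hw
  rw [hden, norm_zero, norm_le_zero_iff] at hnum
  exact lft_det_ne_zero hα.ne' hz (by linear_combination lftA α z * hden + lftB z * hnum)

theorem SchurFunction.lft (hα : 0 < α) {s₁ : ℂ → ℂ} (hs₁ : SchurFunction s₁) :
    SchurFunction (lft α s₁) := by
  have hden : ∀ z ∈ unitDisk, -lftB z * s₁ z + lftC α z ≠ 0 := fun z hz =>
    lft_den_ne_zero hα hz (hs₁.2 z hz)
  have hd := hs₁.1
  refine ⟨?_, fun z hz => ?_⟩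
  · rw [show _root_.lft α s₁ = _ from funext (lft_apply α s₁)]
    refine DifferentiableOn.div ?_ ?_ hden <;> simp only [lftA, lftB, lftC] <;> fun_prop
  · rw [lft_apply, norm_div, div_le_one (norm_pos_iff.2 (hden z hz))]
    exact norm_lft_num_le_norm_lft_den hα.le hz.le (hs₁.2 z hz)

theorem lft_sub_eq {z w : ℂ} (hden : -lftB z * w + lftC α z ≠ 0) :
    (lftA α z * w + lftB z) / (-lftB z * w + lftC α z) - (1 + α * (z - 1)) =
      α * (z - 1) ^ 2 * (w + (2 * α - 1)) * (-lftB z * w + lftC α z)⁻¹ := by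
  rw [eq_mul_inv_iff_mul_eq₀ hden, sub_mul, div_mul_cancel₀ _ hden]
  simp only [lftA, lftB, lftC]
  ring

theorem lft_den_eq (α : ℝ) (z w : ℂ) :
    -lftB z * w + lftC α z = -2 * (w - 1) - (z - 1) * (w + (2 * α - 1)) := by
  simp only [lftB, lftC]
  ring

theorem ntBigO_lft (hα : 0 < α) {s₁ : ℂ → ℂ} (hs₁ : SchurFunction s₁)
    (hsep : NTLiminfPos s₁ 1) : NTBigO (fun z => lft α s₁ z - (1 + α * (z - 1))) 2 := by
  intro K hK
  set l := 𝓝[stolzRegion K] (1 : ℂ)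
  have hdisk : ∀ᶠ z in l, z ∈ unitDisk :=
    mem_of_superset self_mem_nhdsWithin (stolzRegion_subset_unitDisk K)
  have hbdd : (fun z => s₁ z + (2 * α - 1 : ℂ)) =O[l] fun _ => (1 : ℂ) := by
    refine IsBigO.of_bound (1 + ‖(2 * α - 1 : ℂ)‖) ?_
    filter_upwards [hdisk] with z hz
    rw [norm_one, mul_one]
    exact (norm_add_le _ _).trans (by linarith [hs₁.2 z hz])
  have hlead : (fun _ => (1 : ℂ)) =O[l] fun z => -2 * (s₁ z - 1) :=
    ((ntLiminfPos_iff_isBigO 1 hs₁.2).1 hsep K hK).trans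
      (isBigO_self_const_mul (by norm_num) _ l)
  have hsmall : (fun z => (z - 1) * (s₁ z + (2 * α - 1))) =o[l] fun z => -2 * (s₁ z - 1) := by
    have hz1 := (isLittleO_one_iff ℂ).2 (tendsto_sub_one_nhdsWithin_stolzRegion K)
    have := hz1.mul_isBigO hbdd
    simp only [mul_one] at this
    exact this.trans_isBigO hlead
  have hden : (fun _ => (1 : ℂ)) =O[l] fun z => -lftB z * s₁ z + lftC α z :=
    (hlead.trans hsmall.right_isBigO_sub).congr_right fun z => (lft_den_eq α z (s₁ z)).symm
  have hinv : (fun z => (-lftB z * s₁ z + lftC α z)⁻¹) =O[l] fun _ => (1 : ℂ) := by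
    simpa using hden.inv_rev (Eventually.of_forall fun _ h => absurd h one_ne_zero)
  have hprod := ((isBigO_const_mul_self (α : ℂ) (fun z => (z - 1) ^ 2) l).mul hbdd).mul hinv
  refine hprod.congr' ?_ (Eventually.of_forall fun z => by simp)
  filter_upwards [hdisk] with z hz
  rw [lft_apply, lft_sub_eq (lft_den_ne_zero hα hz (hs₁.2 z hz))]

theorem lft_injective (hα : 0 < α) {s₁ t₁ : ℂ → ℂ} (hs₁ : SchurFunction s₁)
    (ht₁ : SchurFunction t₁) {z : ℂ} (hz : z ∈ unitDisk)
    (h : lft α s₁ z = lft α t₁ z) : s₁ z = t₁ z := by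
  rw [lft_apply, lft_apply] at h
  exact mobius_injective (lft_det_ne_zero hα.ne' hz) (lft_den_ne_zero hα hz (hs₁.2 z hz))
    (lft_den_ne_zero hα hz (ht₁.2 z hz)) h

theorem lft_const_one_sub_two_mul (hα : α ≠ 0) (z : ℂ) :
    lft α (fun _ => 1 - 2 * α) z = α * z + 1 - α := by
  have hden : (2 * α + 1 - z * (2 * α - 1) - (1 + z) * (1 - 2 * α) : ℂ) = 4 * α := by ring
  have h4 : (4 * α : ℂ) ≠ 0 := mul_ne_zero (by norm_num) (ofReal_ne_zero.2 hα)
  rw [lft, hden, div_eq_iff h4]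
  ring

def lftInv (α : ℝ) (s : ℂ → ℂ) (z : ℂ) : ℂ :=
  (lftC α z * s z - lftB z) / (lftA α z + lftB z * s z)

theorem norm_lftInv_num_le_norm_lftInv_den (hα : 0 ≤ α) {z y : ℂ}
    (hjulia : (1 - ‖z‖ ^ 2) * ‖1 - y‖ ^ 2 ≤ α * (1 - ‖y‖ ^ 2) * ‖1 - z‖ ^ 2) :
    ‖lftC α z * y - lftB z‖ ≤ ‖lftA α z + lftB z * y‖ := by
  have h := norm_sq_lftInv_den_sub_norm_sq_lftInv_num α z y
  have : 0 ≤ 4 * α * (α * (1 - ‖y‖ ^ 2) * ‖1 - z‖ ^ 2 - (1 - ‖z‖ ^ 2) * ‖1 - y‖ ^ 2) :=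
    mul_nonneg (by positivity) (sub_nonneg.2 hjulia)
  exact (pow_le_pow_iff_left₀ (norm_nonneg _) (norm_nonneg _) two_ne_zero).1 (by linarith)

theorem lftInv_den_ne_zero (hα : 0 < α) {z y : ℂ} (hz : z ∈ unitDisk)
    (hjulia : (1 - ‖z‖ ^ 2) * ‖1 - y‖ ^ 2 ≤ α * (1 - ‖y‖ ^ 2) * ‖1 - z‖ ^ 2) :
    lftA α z + lftB z * y ≠ 0 := by
  intro hden
  have hnum : lftC α z * y - lftB z = 0 := by
    simpa [hden] using norm_lftInv_num_le_norm_lftInv_den hα.le hjulia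
  exact lft_det_ne_zero hα.ne' hz (by linear_combination lftC α z * hden - lftB z * hnum)

theorem lftInv_sub_one {z y : ℂ} (hden : lftA α z + lftB z * y ≠ 0) :
    (lftC α z * y - lftB z) / (lftA α z + lftB z * y) - 1 =
      2 * α * (1 - z) * (y - 1) * (lftA α z + lftB z * y)⁻¹ := by
  rw [eq_mul_inv_iff_mul_eq₀ hden, sub_mul, div_mul_cancel₀ _ hden]
  simp only [lftA, lftB, lftC]
  ring

theorem lftInv_den_eq (α : ℝ) (z y : ℂ) :
    lftA α z + lftB z * y = α * (z - 1) ^ 2 + (1 + z) * (y - (1 + α * (z - 1))) := by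
  simp only [lftA, lftB]
  ring

section Inverse

variable {s : ℂ → ℂ} (hα : 0 < α) (hs : SchurFunction s)
  (hbig : NTBigO (fun z => s z - (1 + α * (z - 1))) 2)
include hα hs hbig

theorem SchurFunction.julia_of_ntBigO {z : ℂ} (hz : z ∈ unitDisk) :
    (1 - ‖z‖ ^ 2) * ‖1 - s z‖ ^ 2 ≤ α * (1 - ‖s z‖ ^ 2) * ‖1 - z‖ ^ 2 := by
  simpa [abs_of_pos hα] using hs.julia hbig.tendsto_one_sub_div_one_sub hz

theorem SchurFunction.lftInv_den_ne_zero {z : ℂ} (hz : z ∈ unitDisk) :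
    lftA α z + lftB z * s z ≠ 0 :=
  _root_.lftInv_den_ne_zero hα hz (hs.julia_of_ntBigO hα hbig hz)

theorem SchurFunction.lftInv : SchurFunction (lftInv α s) := by
  have hden : ∀ z ∈ unitDisk, lftA α z + lftB z * s z ≠ 0 := fun z hz =>
    hs.lftInv_den_ne_zero hα hbig hz
  have hd := hs.1
  refine ⟨?_, fun z hz => ?_⟩
  · refine DifferentiableOn.div ?_ ?_ hden <;> simp only [lftA, lftB, lftC] <;> fun_prop
  · rw [_root_.lftInv, norm_div, div_le_one (norm_pos_iff.2 (hden z hz))]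
    exact norm_lftInv_num_le_norm_lftInv_den hα.le (hs.julia_of_ntBigO hα hbig hz)

theorem lft_lftInv {z : ℂ} (hz : z ∈ unitDisk) : lft α (lftInv α s) z = s z := by
  rw [lft_apply]
  refine mobius_eq_of_mul_eq (lft_det_ne_zero hα.ne' hz) ?_
  rw [neg_mul, sub_neg_eq_add, lftInv, mul_div_cancel₀ _ (hs.lftInv_den_ne_zero hα hbig hz)]

theorem ntLiminfPos_lftInv : NTLiminfPos (lftInv α s) 1 := by
  rw [ntLiminfPos_iff_isBigO 1 (hs.lftInv hα hbig).2]
  intro K hK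
  set l := 𝓝[stolzRegion K] (1 : ℂ)
  have hdisk : ∀ᶠ z in l, z ∈ unitDisk :=
    mem_of_superset self_mem_nhdsWithin (stolzRegion_subset_unitDisk K)
  have hα' : (α : ℂ) ≠ 0 := ofReal_ne_zero.2 hα.ne'
  have herr : (fun z => s z - (1 + α * (z - 1))) =o[l] fun z => (α : ℂ) * (z - 1) :=
    (hbig K hK).trans_isLittleO <|
      ((isLittleO_pow_id one_lt_two).comp_tendsto
        (tendsto_sub_one_nhdsWithin_stolzRegion K)).trans_isBigO (isBigO_self_const_mul hα' _ l)
  have hlin : (fun z => z - 1) =O[l] fun z => s z - 1 :=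
    ((isBigO_self_const_mul hα' _ l).trans herr.right_isBigO_add).congr_right fun z => by ring
  have hnum : (fun z => (z - 1) ^ 2) =O[l] fun z => 2 * α * (1 - z) * (s z - 1) :=
    ((isBigO_self_const_mul (c := -(2 * α : ℂ)) (by simpa using hα') (fun z => z - 1) l).mul
      hlin).congr (fun z => by ring) (fun z => by ring)
  have hden : (fun z => lftA α z + lftB z * s z) =O[l] fun z => (z - 1) ^ 2 := by
    have hB : (fun z : ℂ => 1 + z) =O[l] fun _ => (1 : ℂ) :=
      (((continuous_const.add continuous_id).tendsto 1).mono_left nhdsWithin_le_nhds).isBigO_one ℂ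
    exact ((isBigO_const_mul_self (α : ℂ) _ l).add
      ((hB.mul (hbig K hK)).congr_right fun z => one_mul _)).congr_left
        fun z => (lftInv_den_eq α z (s z)).symm
  have hprod := (hden.trans hnum).mul (isBigO_refl (fun z => (lftA α z + lftB z * s z)⁻¹) l)
  refine hprod.congr' ?_ ?_
  · filter_upwards [hdisk] with z hz using mul_inv_cancel₀ (hs.lftInv_den_ne_zero hα hbig hz)
  · filter_upwards [hdisk] with z hz
    rw [lftInv, lftInv_sub_one (hs.lftInv_den_ne_zero hα hbig hz)]

end Inverse

end Parametrization

theorem interpolation_correspondence_alpha (α : ℝ) (hα : α ∈ Set.Ioo (0 : ℝ) 1) :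
    ((∀ s₁ : ℂ → ℂ, SchurFunction s₁ → NTLiminfPos s₁ 1 →
      SchurFunction (lft α s₁) ∧
        NTBigO (fun z => lft α s₁ z - (1 + α * (z - 1))) 2) ∧
    (∀ s : ℂ → ℂ, SchurFunction s → NTBigO (fun z => s z - (1 + α * (z - 1))) 2 →
      ∃ s₁ : ℂ → ℂ, SchurFunction s₁ ∧ NTLiminfPos s₁ 1 ∧
        ∀ z ∈ unitDisk, s z = lft α s₁ z) ∧
    (∀ s₁ t₁ : ℂ → ℂ, SchurFunction s₁ → NTLiminfPos s₁ 1 →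
      SchurFunction t₁ → NTLiminfPos t₁ 1 →
      (∀ z ∈ unitDisk, lft α s₁ z = lft α t₁ z) →
      ∀ z ∈ unitDisk, s₁ z = t₁ z)) ∧
    (∀ z ∈ unitDisk, lft α (fun _ => 1 - 2 * α) z = α * z + 1 - α) := by
  have hα₀ := hα.1
  refine ⟨⟨fun s₁ hs₁ hsep => ⟨hs₁.lft hα₀, ntBigO_lft hα₀ hs₁ hsep⟩,
    fun s hs hbig => ⟨lftInv α s, hs.lftInv hα₀ hbig, ntLiminfPos_lftInv hα₀ hs hbig,
      fun z hz => (lft_lftInv hα₀ hs hbig hz).symm⟩,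
    fun s₁ t₁ hs₁ _ ht₁ _ h z hz => lft_injective hα₀ hs₁ ht₁ hz (h z hz)⟩,
    fun z _ => lft_const_one_sub_two_mul hα₀.ne' z⟩
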